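/- arXiv:2305.06732 — 6 statements merged into one kernel-verified Lean document; each statement's English description precedes it below -/
import Mathlib

section
/- Suppose v = (v_1, …, v_d) ∈ S and v_i < 2^{d-2} for every index 1 ≤ i ≤ d. Then v + 𝟙 ∈ S. -/
open Finset

/-- The 0/1 vector in `ℝ^n` corresponding to a Boolean vector. -/
noncomputable def toVec {n : ℕ} (v : Fin n → Bool) : Fin n → ℝ :=
  fun i => if v i then 1 else 0

/-- The set `S` of degree sequences of hypergraphs on `n` vertices:
sums of sets of pairwise distinct 0/1 vectors. -/
def degSeqs (n : ℕ) : Set (Fin n → ℝ) :=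
  {b | ∃ U : Finset (Fin n → Bool), b = ∑ v ∈ U, toVec v}

/-- The degree-sequence polytope `Z^n`. -/
def dsPolytope (n : ℕ) : Set (Fin n → ℝ) :=
  {p | ∃ c : (Fin n → Bool) → ℝ, (∀ v, 0 ≤ c v ∧ c v ≤ 1) ∧
    p = ∑ v : Fin n → Bool, c v • toVec v}

/-!
Let `v = ∑_{u ∈ U} u`. If some complementary pair `a, aᶜ` avoids `U`, adding both edges
adds `𝟙`. Otherwise `U` meets every complementary pair, so `|U| ≥ 2^(d-1)`, and the bound
`vᵢ < 2^(d-2)` says that fewer than half of the edges of `U` contain `i`. Hence some edge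
`u ∌ i` has `u ∪ {i} ∉ U`, and replacing `u` by `u ∪ {i}` raises `vᵢ` by one while keeping
`|U|`. Doing this once for each coordinate adds `𝟙`.
-/

theorem Nat.two_mul_lt_of_lt_two_pow_sub_two {m n d : ℕ} (hm : m < 2 ^ (d - 2))
    (hn : 2 ^ d ≤ 2 * n) : 2 * m < n := by
  rcases Nat.lt_or_ge d 2 with hd | hd
  · rw [Nat.sub_eq_zero_of_le hd.le, pow_zero] at hm
    have := d.one_le_two_pow
    omega
  · obtain ⟨e, rfl⟩ := Nat.exists_eq_add_of_le' hd
    simp only [Nat.add_sub_cancel, pow_succ] at hm hn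
    omega

theorem Finset.card_le_two_mul_card_of_compl_mem {α : Type*} [BooleanAlgebra α] [Fintype α]
    [DecidableEq α] {U : Finset α} (hU : ∀ a, a ∉ U → aᶜ ∈ U) :
    Fintype.card α ≤ 2 * #U := by
  have huniv : (univ : Finset α) ⊆ U ∪ U.image compl := fun a _ => by
    by_cases ha : a ∈ U
    · exact mem_union_left _ ha
    · exact mem_union_right _ (mem_image.2 ⟨aᶜ, hU a ha, compl_compl a⟩)
  calc Fintype.card α ≤ #(U ∪ U.image compl) := card_le_card huniv
    _ ≤ #U + #(U.image compl) := card_union_le _ _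
    _ = 2 * #U := by rw [card_image_of_injective _ compl_injective, two_mul]

theorem Finset.exists_mem_update_true_notMem {ι : Type*} [DecidableEq ι]
    {W : Finset (ι → Bool)} {k : ι} (hk : 2 * #{u ∈ W | u k = true} < #W) :
    ∃ u ∈ W, u k = false ∧ Function.update u k true ∉ W := by
  by_contra! hcon
  have hmaps : ∀ u ∈ {u ∈ W | u k = false},
      Function.update u k true ∈ {u ∈ W | u k = true} := fun u hu => by
    rw [mem_filter] at hu
    simpa using hcon u hu.1 hu.2
  have hinj : Set.InjOn (fun u : ι → Bool => Function.update u k true)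
      ({u ∈ W | u k = false} : Finset (ι → Bool)) :=
    fun u₁ h₁ u₂ h₂ heq => by
      simp only [mem_coe, mem_filter] at h₁ h₂
      funext j
      by_cases hj : j = k
      · rw [hj, h₁.2, h₂.2]
      · simpa [hj] using congrFun heq j
  have hle := card_le_card_of_injOn _ hmaps hinj
  have hsplit := card_filter_add_card_filter_not (s := W) (fun u => u k = true)
  simp only [Bool.not_eq_true] at hsplit
  omega

variable {d : ℕ}

theorem sum_toVec_apply (U : Finset (Fin d → Bool)) (i : Fin d) :
    (∑ u ∈ U, toVec u) i = #{u ∈ U | u i = true} := by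
  simp [Finset.sum_apply, toVec, Finset.sum_boole]

theorem toVec_add_toVec_compl (u : Fin d → Bool) : toVec u + toVec uᶜ = 1 := by
  funext i
  cases h : u i <;> simp [toVec, h]

theorem toVec_update_true {u : Fin d → Bool} {k : Fin d} (hu : u k = false) :
    toVec (Function.update u k true) = toVec u + Pi.single k 1 := by
  funext i
  by_cases hi : i = k
  · subst hi; simp [toVec, hu]
  · simp [toVec, hi]

theorem sum_add_one_mem_degSeqs_of_compl_notMem {U : Finset (Fin d → Bool)} {a : Fin d → Bool}
    (ha : a ∉ U) (hac : aᶜ ∉ U) : (∑ u ∈ U, toVec u) + 1 ∈ degSeqs d := by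
  rcases d.eq_zero_or_pos with rfl | hd
  · exact ⟨U, Subsingleton.elim _ _⟩
  have : Nonempty (Fin d) := ⟨⟨0, hd⟩⟩
  refine ⟨insert a (insert aᶜ U), ?_⟩
  rw [sum_insert (by simp [ha, ne_compl_self]), sum_insert hac, ← add_assoc,
    toVec_add_toVec_compl, add_comm]

theorem exists_card_eq_sum_toVec_eq_add_single {W : Finset (Fin d → Bool)} {k : Fin d}
    (hk : 2 * #{u ∈ W | u k = true} < #W) :
    ∃ W' : Finset (Fin d → Bool), #W' = #W ∧
      ∑ u ∈ W', toVec u = ∑ u ∈ W, toVec u + Pi.single k 1 := by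
  obtain ⟨u, huW, huk, hflip⟩ := exists_mem_update_true_notMem hk
  have hnotMem : Function.update u k true ∉ W.erase u := fun h => hflip (mem_of_mem_erase h)
  refine ⟨insert (Function.update u k true) (W.erase u), ?_, ?_⟩
  · rw [card_insert_of_notMem hnotMem, card_erase_add_one huW]
  · rw [sum_insert hnotMem, toVec_update_true huk, ← add_sum_erase W _ huW]
    abel

theorem exists_card_eq_sum_toVec_eq_add_sum_single {U : Finset (Fin d → Bool)}
    (hU : ∀ i, 2 * #{u ∈ U | u i = true} < #U) (s : Finset (Fin d)) :
    ∃ W : Finset (Fin d → Bool), #W = #U ∧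
      ∑ u ∈ W, toVec u = ∑ u ∈ U, toVec u + ∑ k ∈ s, Pi.single k 1 := by
  induction s using Finset.induction_on with
  | empty => exact ⟨U, rfl, by simp⟩
  | insert k s hk ih =>
    obtain ⟨W, hcard, hsum⟩ := ih
    have hdeg : #{u ∈ W | u k = true} = #{u ∈ U | u k = true} := by
      have := congrFun hsum k
      rw [Pi.add_apply, sum_toVec_apply, sum_toVec_apply, Finset.sum_apply, sum_pi_single,
        if_neg hk, add_zero] at this
      exact_mod_cast this
    obtain ⟨W', hcard', hsum'⟩ :=
      exists_card_eq_sum_toVec_eq_add_single (by rw [hdeg, hcard]; exact hU k)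
    refine ⟨W', hcard'.trans hcard, ?_⟩
    rw [hsum', hsum, sum_insert hk]
    abel

theorem sum_add_one_mem_degSeqs_of_two_mul_lt_card {U : Finset (Fin d → Bool)}
    (hU : ∀ i, 2 * #{u ∈ U | u i = true} < #U) : (∑ u ∈ U, toVec u) + 1 ∈ degSeqs d := by
  obtain ⟨W, -, hW⟩ := exists_card_eq_sum_toVec_eq_add_sum_single hU univ
  exact ⟨W, by rw [hW, univ_sum_single]; rfl⟩

/-- Claim 2: if `v ∈ S` and `vᵢ < 2^(d-2)` for every index `i`, then `v + 𝟙 ∈ S`. -/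
theorem claim_2 (d : ℕ) (v : Fin d → ℝ) (hv : v ∈ degSeqs d)
    (h : ∀ i, v i < 2 ^ (d - 2)) :
    (fun j => v j + 1) ∈ degSeqs d := by
  obtain ⟨U, rfl⟩ := hv
  by_cases hpair : ∃ a, a ∉ U ∧ aᶜ ∉ U
  · obtain ⟨a, ha, hac⟩ := hpair
    exact sum_add_one_mem_degSeqs_of_compl_notMem ha hac
  push Not at hpair
  have hcard : 2 ^ d ≤ 2 * #U := by
    simpa using card_le_two_mul_card_of_compl_mem hpair
  refine sum_add_one_mem_degSeqs_of_two_mul_lt_card fun i => ?_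
  have hi := h i
  rw [sum_toVec_apply] at hi
  exact Nat.two_mul_lt_of_lt_two_pow_sub_two (by exact_mod_cast hi) hcard
end

section
/- Suppose q = (q_1, …, q_d) ∈ S and q_i > q_j for some indices i and j. Then the vector q' obtained from q by decreasing the i-th coordinate by 1 and increasing the j-th coordinate by 1 (i.e. q' = q − e_i + e_j) also belongs to S. -/
/-!
Write `q = ∑_{v ∈ U} v`, so that `q_k` counts the edges of `U` containing `k`. Swapping the
coordinates `i` and `j` sends every edge containing `i` to a vector containing `j`, injectively.
Since fewer edges contain `j` than `i`, some edge `v` with `i ∈ v`, `j ∉ v` is sent outside `U`,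
and replacing `v` by its swap `v - e_i + e_j` in `U` gives `q - e_i + e_j`.
-/
open Finset

lemma sum_toVec_apply_s8 {n : ℕ} (U : Finset (Fin n → Bool)) (k : Fin n) :
    (∑ v ∈ U, toVec v) k = #(U.filter fun v => v k) := by
  simp [toVec, Finset.sum_boole]

lemma comp_swap_eq_self_of_eq {ι α : Type*} [DecidableEq ι] {v : ι → α} {i j : ι}
    (h : v i = v j) : v ∘ Equiv.swap i j = v := by
  funext k
  simp only [Function.comp_apply, Equiv.swap_apply_def]
  split_ifs <;> simp_all

lemma exists_mem_comp_swap_notMem {ι : Type*} [DecidableEq ι] {U : Finset (ι → Bool)}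
    {i j : ι} (h : #(U.filter fun v => v j) < #(U.filter fun v => v i)) :
    ∃ v ∈ U, v i ∧ ¬ v j ∧ v ∘ Equiv.swap i j ∉ U := by
  by_contra! hswap
  refine h.not_ge (card_le_card_of_injOn (· ∘ Equiv.swap i j) ?_
    ((Equiv.swap i j).surjective.injective_comp_right.injOn))
  intro v hv
  simp only [coe_filter, Set.mem_ofPred_eq] at hv ⊢
  obtain ⟨hvU, hvi⟩ := hv
  refine ⟨?_, by simpa using hvi⟩
  by_cases hvj : v j
  · rwa [comp_swap_eq_self_of_eq (hvi.trans hvj.symm)]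
  · exact hswap v hvU hvi hvj

lemma toVec_comp_swap {n : ℕ} {v : Fin n → Bool} {i j : Fin n} (hvi : v i) (hvj : ¬ v j) :
    toVec (v ∘ Equiv.swap i j) =
      fun k => toVec v k - (if k = i then 1 else 0) + (if k = j then 1 else 0) := by
  have hij : i ≠ j := by rintro rfl; exact hvj hvi
  funext k
  simp only [toVec, Function.comp_apply, Equiv.swap_apply_def]
  by_cases hki : k = i
  · subst hki; simp_all
  · by_cases hkj : k = j
    · subst hkj; simp_all
    · simp [hki, hkj]

/-- Observation: if `q ∈ S` and `qᵢ > qⱼ`, then `q - eᵢ + eⱼ ∈ S`. -/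
theorem observation_simple (d : ℕ) (q : Fin d → ℝ) (hq : q ∈ degSeqs d)
    (i j : Fin d) (hij : q j < q i) :
    (fun k => q k - (if k = i then 1 else 0) + (if k = j then 1 else 0)) ∈ degSeqs d := by
  obtain ⟨U, rfl⟩ := hq
  rw [sum_toVec_apply_s8, sum_toVec_apply_s8, Nat.cast_lt] at hij
  obtain ⟨v, hvU, hvi, hvj, hswap⟩ := exists_mem_comp_swap_notMem hij
  refine ⟨insert (v ∘ Equiv.swap i j) (U.erase v), ?_⟩
  rw [sum_insert fun h => hswap (mem_of_mem_erase h), sum_erase_eq_sub hvU,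
    toVec_comp_swap hvi hvj]
  funext k
  simp only [Pi.add_apply, Pi.sub_apply]
  ring
end

section
/- Suppose q = (q_1, …, q_d) ∈ S, b = (b_1, …, b_d) ∈ ℤ^d is an integer vector, and there exists a partition I ∪ J of {1, …, d} such that: (1) b_i ≤ b_j for every i ∈ I and j ∈ J; (2) q_i ≤ b_i for every i ∈ I and q_j ≥ b_j for every j ∈ J; (3) Σ_{i=1}^d b_i = Σ_{i=1}^d q_i. Then b ∈ S. -/
open Finset

/-!
If vertex `j` has larger degree than vertex `i` in a hypergraph `U`, then more edges contain `j`
but not `i` than contain `i` but not `j`, so some edge `e ∋ j`, `i ∉ e`, has its `i ↔ j` swap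
outside `U`; replacing `e` by that swap moves one unit of degree from `j` to `i`. Starting from
`q` and repeatedly moving a unit from some `j ∈ J` with `b j < q j` to some `i ∈ I` with
`q i < b i` (then `q i < b i ≤ b j < q j`) preserves the hypotheses and ends at `b`.
-/

section Exchange

variable {α : Type*}

def charVec (v : α → Bool) : α → ℤ := fun i => if v i then 1 else 0

def degrees (U : Finset (α → Bool)) : α → ℤ := ∑ v ∈ U, charVec v

lemma degrees_sub_degrees (U : Finset (α → Bool)) (i j : α) :
    degrees U j - degrees U i = #{v ∈ U | v j ∧ ¬ v i} - #{v ∈ U | v i ∧ ¬ v j} := by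
  have pointwise : ∀ v : α → Bool, charVec v j - charVec v i =
      (if v j ∧ ¬ v i then 1 else 0) - (if v i ∧ ¬ v j then 1 else 0) := by
    intro v
    cases hi : v i <;> cases hj : v j <;> simp [charVec, hi, hj]
  rw [degrees, Finset.sum_apply, Finset.sum_apply, ← sum_sub_distrib,
    sum_congr rfl fun v _ => pointwise v, sum_sub_distrib, sum_boole, sum_boole]

lemma degrees_insert_erase [DecidableEq (α → Bool)] {U : Finset (α → Bool)} {v w : α → Bool}
    (hv : v ∈ U) (hw : w ∉ U) :
    degrees (insert w (U.erase v)) = degrees U - charVec v + charVec w := by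
  rw [degrees, sum_insert fun h => hw (mem_of_mem_erase h), degrees, ← sum_erase_add _ _ hv]
  abel

lemma charVec_comp_swap [DecidableEq α] {v : α → Bool} {i j : α} (hij : i ≠ j)
    (hvi : v i = false) (hvj : v j = true) :
    charVec (v ∘ Equiv.swap i j) = charVec v + Pi.single i 1 - Pi.single j 1 := by
  funext k
  by_cases hki : k = i
  · subst hki; simp [charVec, hvi, hvj, hij]
  by_cases hkj : k = j
  · subst hkj; simp [charVec, hvi, hvj, Ne.symm hij]
  simp [charVec, Equiv.swap_apply_of_ne_of_ne hki hkj, hki, hkj]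

lemma exists_degrees_eq_add_single_sub_single [DecidableEq α] [DecidableEq (α → Bool)]
    {U : Finset (α → Bool)} {i j : α} (h : degrees U i < degrees U j) :
    ∃ U', degrees U' = degrees U + Pi.single i 1 - Pi.single j 1 := by
  have hij : i ≠ j := by rintro rfl; exact lt_irrefl _ h
  have hcard : #{v ∈ U | v i ∧ ¬ v j} < #{v ∈ U | v j ∧ ¬ v i} := by
    have := degrees_sub_degrees U i j
    omega
  -- otherwise `e ↦ e ∘ swap i j` injects the larger set in `hcard` into the smaller one
  have hfree : ∃ v ∈ U, v j = true ∧ v i = false ∧ v ∘ Equiv.swap i j ∉ U := by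
    by_contra! hswap
    refine hcard.not_ge (card_le_card_of_injOn (· ∘ Equiv.swap i j) (fun v hv => ?_)
      ((Equiv.swap i j).surjective.injective_comp_right.injOn))
    simp only [coe_filter, Bool.not_eq_true] at hv ⊢
    simp [hswap v hv.1 hv.2.1 hv.2.2, hv.2]
  obtain ⟨v, hv, hvj, hvi, hvU⟩ := hfree
  exact ⟨_, by rw [degrees_insert_erase hv hvU, charVec_comp_swap hij hvi hvj]; abel⟩

end Exchange

lemma mem_of_forall_add_single_sub_single_mem {α : Type*} [Fintype α] [DecidableEq α]
    {D : Set (α → ℤ)}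
    (hD : ∀ x ∈ D, ∀ i j, x i < x j → x + Pi.single i 1 - Pi.single j 1 ∈ D)
    {q b : α → ℤ} (hq : q ∈ D) {I J : Finset α} (hdisj : Disjoint I J) (hunion : I ∪ J = univ)
    (h1 : ∀ i ∈ I, ∀ j ∈ J, b i ≤ b j) (h2I : ∀ i ∈ I, q i ≤ b i) (h2J : ∀ j ∈ J, b j ≤ q j)
    (h3 : ∑ i, b i = ∑ i, q i) : b ∈ D := by
  have hsplit (f : α → ℤ) : ∑ i, f i = ∑ i ∈ I, f i + ∑ i ∈ J, f i := by
    rw [← sum_union hdisj, hunion]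
  obtain ⟨n, hn⟩ : ∃ n : ℕ, ∑ i ∈ I, q i + n = ∑ i ∈ I, b i :=
    ⟨(∑ i ∈ I, b i - ∑ i ∈ I, q i).toNat, by have := sum_le_sum h2I; omega⟩
  induction n generalizing q with
  | zero =>
    have hJ : ∑ j ∈ J, b j = ∑ j ∈ J, q j := by rw [hsplit, hsplit] at h3; omega
    have hqb : q = b := funext fun k => by
      rcases mem_union.mp (hunion ▸ mem_univ k) with hk | hk
      · exact (sum_eq_sum_iff_of_le h2I).mp (by simpa using hn) k hk
      · exact ((sum_eq_sum_iff_of_le h2J).mp hJ k hk).symm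
    exact hqb ▸ hq
  | succ n ih =>
    obtain ⟨i₀, hi₀, hqi₀⟩ := exists_lt_of_sum_lt (s := I) (f := q) (g := b) (by omega)
    obtain ⟨j₀, hj₀, hqj₀⟩ := exists_lt_of_sum_lt (s := J) (f := b) (g := q)
      (by rw [hsplit, hsplit] at h3; omega)
    have hne (i : α) (hi : i ∈ I) (j : α) (hj : j ∈ J) : i ≠ j :=
      fun h => disjoint_left.mp hdisj hi (h ▸ hj)
    refine ih (hD q hq i₀ j₀ (by linarith [h1 i₀ hi₀ j₀ hj₀])) (fun i hi => ?_) (fun j hj => ?_)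
      ?_ ?_
    · by_cases h : i = i₀
      · subst h; simpa [hne i hi j₀ hj₀] using hqi₀
      · simp [h, hne i hi j₀ hj₀, h2I i hi]
    · by_cases h : j = j₀
      · subst h; simpa [(hne i₀ hi₀ j hj).symm] using hqj₀
      · simp [h, (hne i₀ hi₀ j hj).symm, h2J j hj]
    · simp [sum_add_distrib, sum_sub_distrib, h3]
    · simp only [Pi.sub_apply, Pi.add_apply, sum_sub_distrib, sum_add_distrib, sum_pi_single', hi₀,
        disjoint_right.mp hdisj hj₀, if_true, if_false, sub_zero]
      omega

lemma sum_toVec_eq_degrees {n : ℕ} (U : Finset (Fin n → Bool)) :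
    ∑ v ∈ U, toVec v = fun i => (degrees U i : ℝ) := by
  funext i
  simp [toVec, degrees, charVec, Finset.sum_apply]

/-- Lemma (simple): if `q ∈ S`, `b` is an integer vector, and there is a partition
`I ∪ J` of the coordinates with (1) `bᵢ ≤ bⱼ` for `i ∈ I`, `j ∈ J`;
(2) `qᵢ ≤ bᵢ` on `I` and `qⱼ ≥ bⱼ` on `J`; (3) `∑ b = ∑ q`, then `b ∈ S`. -/
theorem lemma_simple (d : ℕ) (q : Fin d → ℝ) (hq : q ∈ degSeqs d)
    (b : Fin d → ℤ) (I J : Finset (Fin d))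
    (hdisj : Disjoint I J) (hunion : I ∪ J = Finset.univ)
    (h1 : ∀ i ∈ I, ∀ j ∈ J, b i ≤ b j)
    (h2I : ∀ i ∈ I, q i ≤ (b i : ℝ))
    (h2J : ∀ j ∈ J, (b j : ℝ) ≤ q j)
    (h3 : ∑ i, (b i : ℝ) = ∑ i, q i) :
    (fun i => (b i : ℝ)) ∈ degSeqs d := by
  obtain ⟨U, rfl⟩ := hq
  simp only [sum_toVec_eq_degrees] at h2I h2J h3
  have hb : b ∈ Set.range degrees :=
    mem_of_forall_add_single_sub_single_mem
      (by rintro _ ⟨U, rfl⟩ i j h; exact exists_degrees_eq_add_single_sub_single h)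
      (Set.mem_range_self U) hdisj hunion h1 (by exact_mod_cast h2I) (by exact_mod_cast h2J)
      (by exact_mod_cast h3)
  obtain ⟨U', hU'⟩ := hb
  exact ⟨U', by rw [sum_toVec_eq_degrees, hU']⟩
end

section
/- Assume P = (p_1, …, p_d) ∈ S with Σ_{i=1}^d p_i > d+1, and let 0 ≤ r < d+1 be an integer. Then there exists Q = (q_1, …, q_d) ∈ S such that q_i ≤ p_i for every 1 ≤ i ≤ d and Σ_{i=1}^d p_i = r + Σ_{i=1}^d q_i. -/
open Finset

/-
Removing one unit from the total degree while staying below coordinatewise is always possible: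
pick an edge `v` of minimal positive size. If `|v| = 1`, delete it; otherwise drop one vertex
from `v`. The smaller edge is not already present by minimality, so the edges stay distinct.
Iterating this `r` times gives `Q`; `r < d + 1 < ∑ pᵢ` guarantees there is enough degree.
-/

namespace DegSeq

variable {n : ℕ}

def weight (v : Fin n → Bool) : ℕ := #{i | v i = true}

lemma sum_toVec (v : Fin n → Bool) : ∑ i, toVec v i = weight v := by
  simp [toVec, weight, sum_boole]

lemma sum_sum_toVec (U : Finset (Fin n → Bool)) :
    ∑ i, (∑ v ∈ U, toVec v) i = ((∑ v ∈ U, weight v : ℕ) : ℝ) := by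
  rw [Nat.cast_sum, ← sum_congr rfl fun v _ => sum_toVec v]
  simp only [Finset.sum_apply]
  exact sum_comm

lemma toVec_nonneg (v : Fin n → Bool) : 0 ≤ toVec v := fun i => by
  unfold toVec; positivity

lemma toVec_mono {v w : Fin n → Bool} (h : v ≤ w) : toVec v ≤ toVec w := fun i => by
  have := h i
  unfold toVec
  split_ifs <;> simp_all [Bool.le_iff_imp]

lemma weight_update_false_add_one {v : Fin n → Bool} {i : Fin n} (hi : v i = true) :
    weight (Function.update v i false) + 1 = weight v := by
  have : ({j | Function.update v i false j = true} : Finset (Fin n)) =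
      ({j | v j = true} : Finset (Fin n)).erase i := by
    ext j
    by_cases hji : j = i <;> simp [Function.update, hji, hi]
  rw [weight, this, card_erase_add_one (by simpa using hi)]
  rfl

lemma update_false_le (v : Fin n → Bool) (i : Fin n) : Function.update v i false ≤ v := by
  intro j
  by_cases hji : j = i <;> simp [Function.update, hji]

lemma exists_sum_toVec_le_weight_pred (U : Finset (Fin n → Bool))
    (hU : ∑ v ∈ U, weight v ≠ 0) :
    ∃ U' : Finset (Fin n → Bool), ∑ v ∈ U', toVec v ≤ ∑ v ∈ U, toVec v ∧
      ∑ v ∈ U', weight v + 1 = ∑ v ∈ U, weight v := by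
  obtain ⟨v, hvT, hmin⟩ := exists_min_image {v ∈ U | weight v ≠ 0} weight
    (by simpa [filter_nonempty_iff] using exists_ne_zero_of_sum_ne_zero hU)
  obtain ⟨hvU, hv⟩ := mem_filter.1 hvT
  have hsum_toVec := add_sum_erase U toVec hvU
  have hsum_weight := add_sum_erase U weight hvU
  by_cases hv1 : weight v = 1
  · refine ⟨U.erase v, ?_, by omega⟩
    exact sum_le_sum_of_subset_of_nonneg (erase_subset v U) fun w _ _ => toVec_nonneg w
  · obtain ⟨i, hi⟩ := card_ne_zero.1 hv
    have hw_weight := weight_update_false_add_one (mem_filter.1 hi).2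
    set w := Function.update v i false
    have hwU : w ∉ U.erase v := fun hwU =>
      absurd (hmin w (mem_filter.2 ⟨mem_of_mem_erase hwU, by omega⟩)) (by omega)
    refine ⟨insert w (U.erase v), ?_, ?_⟩
    · rw [sum_insert hwU, ← hsum_toVec]
      exact add_le_add_left (toVec_mono (update_false_le v i)) _
    · rw [sum_insert hwU]
      omega

lemma exists_sum_toVec_le_weight_sub (U : Finset (Fin n → Bool)) {k : ℕ}
    (hk : k ≤ ∑ v ∈ U, weight v) :
    ∃ U' : Finset (Fin n → Bool), ∑ v ∈ U', toVec v ≤ ∑ v ∈ U, toVec v ∧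
      ∑ v ∈ U', weight v + k = ∑ v ∈ U, weight v := by
  induction k with
  | zero => exact ⟨U, le_rfl, rfl⟩
  | succ k ih =>
    obtain ⟨U₁, hle₁, hsum₁⟩ := ih (by omega)
    obtain ⟨U₂, hle₂, hsum₂⟩ := exists_sum_toVec_le_weight_pred U₁ (by omega)
    exact ⟨U₂, hle₂.trans hle₁, by omega⟩

end DegSeq

/-- Claim (modulo): if `P ∈ S` with `∑ pᵢ > d + 1` and `0 ≤ r < d + 1` is an integer, then
there is `Q ∈ S` with `qᵢ ≤ pᵢ` for all `i` and `∑ pᵢ = r + ∑ qᵢ`. -/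
theorem claim_modulo (d : ℕ) (P : Fin d → ℝ) (hP : P ∈ degSeqs d)
    (hsum : (d : ℝ) + 1 < ∑ i, P i) (r : ℕ) (hr : r < d + 1) :
    ∃ Q : Fin d → ℝ, Q ∈ degSeqs d ∧ (∀ i, Q i ≤ P i) ∧
      ∑ i, P i = (r : ℝ) + ∑ i, Q i := by
  obtain ⟨U, rfl⟩ := hP
  rw [DegSeq.sum_sum_toVec] at hsum ⊢
  have hrU : r ≤ ∑ v ∈ U, DegSeq.weight v := by
    have : d + 1 < ∑ v ∈ U, DegSeq.weight v := by exact_mod_cast hsum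
    omega
  obtain ⟨U', hle, hweight⟩ := DegSeq.exists_sum_toVec_le_weight_sub U hrU
  refine ⟨∑ v ∈ U', toVec v, ⟨U', rfl⟩, hle, ?_⟩
  rw [DegSeq.sum_sum_toVec, ← hweight]
  push_cast
  ring
end

section
/- Let d = C(8,2) + C(8,4) = 98 and let B be the 8 × d matrix whose first C(8,2) columns are all vectors in {0,1}^8 with exactly two coordinates equal to one and whose remaining C(8,4) columns are all vectors in {0,1}^8 with exactly four coordinates equal to one. Let v_1, …, v_8 ∈ {0,1}^d be the rows of B. Then the set of vectors of {0,1}^d lying in the real linear span of {v_1, …, v_8} is exactly {0, v_1, v_2, …, v_8}. In particular, any linear combination λ_1 v_1 + ⋯ + λ_8 v_8 with real coefficients that lies in {0,1}^d is either the zero vector or equals one of v_1, …, v_8. -/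
/-! Writing `x = ∑ λₖ vₖ`, the entry of `x` in a column `c` is the sum of the `λₖ` over the ones
of `c`, so `x` is a 0/1 vector exactly when every sum of two and every sum of four of the `λₖ`
lies in `{0, 1}`. Comparing two pair sums through a third index, any two `λ`'s are equal or
differ by one. If all of them equal `t`, then `2t, 4t ∈ {0, 1}` forces `t = 0`. If `λ_b = λ_a + 1`,
every other `λₖ` equals `-λ_a`; at least four indices remain, so the same argument gives
`λ_a = 0`, and `λ` is the indicator of `b`. -/

open Finset

/-- The index set of the columns of the matrix `B`: all 0/1 vectors of length 8 with exactly
two or exactly four ones.  There are `C(8,2) + C(8,4) = 98` such columns, so this index set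
plays the role of `{1, …, d}` for `d = 98` (the order of the columns is immaterial). -/
def ColIdx : Type :=
  {c : Fin 8 → Bool // (Finset.univ.filter fun k => c k = true).card = 2 ∨
    (Finset.univ.filter fun k => c k = true).card = 4}

instance : Fintype ColIdx := by unfold ColIdx; infer_instance

/-- The `k`-th row of the matrix `B`, as a 0/1 vector in `ℝ^d` (`d = 98`). -/
noncomputable def rowVec (k : Fin 8) : ColIdx → ℝ :=
  fun c => if c.1 k then 1 else 0

def TwoFourSumsBinary {ι : Type*} (lam : ι → ℝ) : Prop :=
  ∀ s : Finset ι, #s = 2 ∨ #s = 4 → ∑ k ∈ s, lam k = 0 ∨ ∑ k ∈ s, lam k = 1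

namespace TwoFourSumsBinary

variable {ι : Type*} {lam : ι → ℝ}

lemma eq_zero_of_forall_mem_eq (hlam : TwoFourSumsBinary lam) {s : Finset ι} (hs : 4 ≤ #s)
    {t : ℝ} (ht : ∀ k ∈ s, lam k = t) : t = 0 := by
  obtain ⟨s₄, hs₄, hcard₄⟩ := Finset.exists_subset_card_eq hs
  obtain ⟨s₂, hs₂, hcard₂⟩ := Finset.exists_subset_card_eq (hcard₄ ▸ (by norm_num) : 2 ≤ #s₄)
  have hsum : ∀ u ⊆ s, ∑ k ∈ u, lam k = #u * t := fun u hu => by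
    rw [Finset.sum_congr rfl fun k hk => ht k (hu hk), Finset.sum_const, nsmul_eq_mul]
  have h₄ := hlam s₄ (Or.inr hcard₄)
  have h₂ := hlam s₂ (Or.inl hcard₂)
  rw [hsum s₄ hs₄, hcard₄] at h₄
  rw [hsum s₂ (hs₂.trans hs₄), hcard₂] at h₂
  push_cast at h₂ h₄
  rcases h₂ with h₂ | h₂ <;> rcases h₄ with h₄ | h₄ <;> linarith

variable [DecidableEq ι]

lemma add_eq_zero_or_one (hlam : TwoFourSumsBinary lam) {i j : ι} (hij : i ≠ j) :
    lam i + lam j = 0 ∨ lam i + lam j = 1 := by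
  simpa [Finset.sum_pair hij] using hlam {i, j} (Or.inl (Finset.card_pair hij))

lemma eq_neg_of_eq_add_one (hlam : TwoFourSumsBinary lam) {a b m : ι} (hma : m ≠ a)
    (hmb : m ≠ b) (hab : lam b = lam a + 1) : lam m = -lam a := by
  rcases hlam.add_eq_zero_or_one hma with ha | ha <;>
    rcases hlam.add_eq_zero_or_one hmb with hb | hb <;> linarith

lemma eq_or_eq_add_one_or_add_one_eq (hlam : TwoFourSumsBinary lam) {i j m : ι}
    (hmi : m ≠ i) (hmj : m ≠ j) : lam i = lam j ∨ lam j = lam i + 1 ∨ lam i = lam j + 1 := by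
  rcases hlam.add_eq_zero_or_one hmi with hi | hi <;>
    rcases hlam.add_eq_zero_or_one hmj with hj | hj
  all_goals first
    | exact Or.inl (by linarith)
    | exact Or.inr (Or.inl (by linarith))
    | exact Or.inr (Or.inr (by linarith))

variable [Fintype ι]

lemma eq_pi_single_of_eq_add_one (hlam : TwoFourSumsBinary lam) (hcard : 6 ≤ Fintype.card ι)
    {a b : ι} (hab : a ≠ b) (h : lam b = lam a + 1) : lam = Pi.single b 1 := by
  have hrest : ∀ m ∈ (univ \ {a, b} : Finset ι), lam m = -lam a := fun m hm => by
    simp only [Finset.mem_sdiff, Finset.mem_univ, Finset.mem_insert, Finset.mem_singleton,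
      true_and, not_or] at hm
    exact hlam.eq_neg_of_eq_add_one hm.1 hm.2 h
  have hcard_rest : 4 ≤ #(univ \ {a, b} : Finset ι) := by
    rw [Finset.card_sdiff_of_subset (Finset.subset_univ _), Finset.card_univ,
      Finset.card_pair hab]
    omega
  have ha : lam a = 0 := neg_eq_zero.mp (hlam.eq_zero_of_forall_mem_eq hcard_rest hrest)
  funext m
  by_cases hmb : m = b
  · simp [hmb, h, ha]
  by_cases hma : m = a
  · simp [hma, hab, ha]
  simp [hmb, hlam.eq_neg_of_eq_add_one hma hmb h, ha]

theorem eq_zero_or_eq_pi_single (hlam : TwoFourSumsBinary lam) (hcard : 6 ≤ Fintype.card ι) :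
    lam = 0 ∨ ∃ j, lam = Pi.single j 1 := by
  by_cases hconst : ∀ i j, lam i = lam j
  · exact Or.inl <| funext fun j =>
      hlam.eq_zero_of_forall_mem_eq (by rw [Finset.card_univ]; omega) fun i _ => hconst i j
  push Not at hconst
  obtain ⟨i, j, hij⟩ := hconst
  obtain ⟨m, -, hm⟩ := Finset.exists_mem_notMem_of_card_lt_card (s := {i, j}) (t := univ)
    (Finset.card_le_two.trans_lt (by rw [Finset.card_univ]; omega))
  simp only [Finset.mem_insert, Finset.mem_singleton, not_or] at hm
  rcases hlam.eq_or_eq_add_one_or_add_one_eq hm.1 hm.2 with h | h | h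
  · exact absurd h hij
  · exact Or.inr ⟨j, hlam.eq_pi_single_of_eq_add_one hcard (ne_of_apply_ne lam hij) h⟩
  · exact Or.inr ⟨i, hlam.eq_pi_single_of_eq_add_one hcard (ne_of_apply_ne lam hij).symm h⟩

end TwoFourSumsBinary

def ColIdx.ofFinset (s : Finset (Fin 8)) (hs : #s = 2 ∨ #s = 4) : ColIdx :=
  ⟨fun k => decide (k ∈ s), by simpa using hs⟩

lemma sum_smul_rowVec_apply (lam : Fin 8 → ℝ) (c : ColIdx) :
    (∑ k, lam k • rowVec k) c = ∑ k with c.1 k, lam k := by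
  simp [Finset.sum_apply, rowVec, Finset.sum_filter]

lemma twoFourSumsBinary_of_sum_smul_rowVec {lam : Fin 8 → ℝ}
    (h : ∀ c, (∑ k, lam k • rowVec k) c = 0 ∨ (∑ k, lam k • rowVec k) c = 1) :
    TwoFourSumsBinary lam := fun s hs => by
  have hs' := h (ColIdx.ofFinset s hs)
  rw [sum_smul_rowVec_apply] at hs'
  simpa [ColIdx.ofFinset] using hs'

lemma rowVec_apply_eq_zero_or_one (k : Fin 8) (c : ColIdx) : rowVec k c = 0 ∨ rowVec k c = 1 := by
  unfold rowVec
  split_ifs <;> simp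

/-- The number of columns is `C(8,2) + C(8,4) = 98`, and the set of 0/1 vectors of `ℝ^98`
lying in the real linear span of the rows `v₁, …, v₈` of `B` is exactly
`{0, v₁, …, v₈}`. -/
theorem cube_points_in_span_of_rows :
    Fintype.card ColIdx = Nat.choose 8 2 + Nat.choose 8 4 ∧
    {x : ColIdx → ℝ | (∀ c, x c = 0 ∨ x c = 1) ∧
        x ∈ Submodule.span ℝ (Set.range rowVec)} =
      insert (0 : ColIdx → ℝ) (Set.range rowVec) := by
  refine ⟨by decide, Set.ext fun x => ⟨?_, ?_⟩⟩
  · rintro ⟨h01, hspan⟩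
    obtain ⟨lam, rfl⟩ := (Submodule.mem_span_range_iff_exists_fun ℝ).mp hspan
    rcases (twoFourSumsBinary_of_sum_smul_rowVec h01).eq_zero_or_eq_pi_single (by simp)
      with rfl | ⟨j, rfl⟩
    · simp
    · exact Or.inr ⟨j, by simp [Pi.single_apply, ite_smul]⟩
  · rintro (rfl | ⟨k, rfl⟩)
    · exact ⟨fun _ => Or.inl rfl, Submodule.zero_mem _⟩
    · exact ⟨rowVec_apply_eq_zero_or_one k, Submodule.subset_span (Set.mem_range_self k)⟩
end

section
/- The convex hull of the set S of degree sequences of hypergraphs on vertex set {1,…,d} equals the zonotope {Σ_{v∈{0,1}^d} c_v·v : 0 ≤ c_v ≤ 1 for all v ∈ {0,1}^d}, i.e. the Minkowski sum of the line segments [0, v] over all v ∈ {0,1}^d. -/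
open Finset

/-!
Choosing a subset `U` of the generators `f i` is choosing one endpoint of each segment `[0, f i]`,
so the subset sums form the Minkowski sum of the pairs `{0, f i}`, and the zonotope is the
Minkowski sum of the segments. Since the convex hull of a Minkowski sum is the Minkowski sum of
the convex hulls, and `[0, f i]` is the convex hull of `{0, f i}`, the claim follows.
-/

open Pointwise

section Zonotope

variable {ι E : Type*} [Fintype ι]

lemma setOf_finsetSum_eq_sum_pair [AddCommMonoid E] (f : ι → E) :
    {b | ∃ U : Finset ι, b = ∑ i ∈ U, f i} = ∑ i, ({0, f i} : Set E) := by
  classical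
  ext b
  rw [Set.mem_finsetSum]
  constructor
  · rintro ⟨U, rfl⟩
    refine ⟨fun i => if i ∈ U then f i else 0, fun {i} _ => ?_, ?_⟩
    · dsimp only; split_ifs <;> simp
    · rw [sum_ite_mem, univ_inter]
  · rintro ⟨g, hg, rfl⟩
    refine ⟨univ.filter fun i => g i = f i, ?_⟩
    rw [sum_filter]
    refine sum_congr rfl fun i _ => ?_
    split_ifs with h
    · exact h
    · rcases hg (mem_univ i) with h0 | h1
      · exact h0
      · exact absurd h1 h

variable [AddCommGroup E] [Module ℝ E]

lemma setOf_sum_smul_unitInterval_eq_sum_segment (f : ι → E) :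
    {p | ∃ c : ι → ℝ, (∀ i, 0 ≤ c i ∧ c i ≤ 1) ∧ p = ∑ i, c i • f i} =
      ∑ i, segment ℝ 0 (f i) := by
  ext p
  simp only [Set.mem_finsetSum, segment_eq_image, mem_univ, forall_const, Set.mem_ofPred_eq]
  constructor
  · rintro ⟨c, hc, rfl⟩
    exact ⟨fun i => c i • f i, fun {i} => ⟨c i, Set.mem_Icc.2 (hc i), by simp⟩, rfl⟩
  · rintro ⟨g, hg, rfl⟩
    choose c hc hgc using fun i => hg (i := i)
    refine ⟨c, fun i => Set.mem_Icc.1 (hc i), sum_congr rfl fun i _ => ?_⟩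
    simp [← hgc i]

theorem convexHull_setOf_finsetSum (f : ι → E) :
    convexHull ℝ {b | ∃ U : Finset ι, b = ∑ i ∈ U, f i} =
      {p | ∃ c : ι → ℝ, (∀ i, 0 ≤ c i ∧ c i ≤ 1) ∧ p = ∑ i, c i • f i} := by
  rw [setOf_finsetSum_eq_sum_pair, setOf_sum_smul_unitInterval_eq_sum_segment, convexHull_sum]
  exact sum_congr rfl fun i _ => convexHull_pair 0 (f i)

end Zonotope

/-- The convex hull of the set of degree sequences equals the zonotope
`{∑_{v ∈ {0,1}^d} c_v v : 0 ≤ c_v ≤ 1}`. -/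
theorem convexHull_degSeqs_eq_dsPolytope (d : ℕ) :
    convexHull ℝ (degSeqs d) = dsPolytope d :=
  convexHull_setOf_finsetSum toVec
end
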